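/- On the symmetric group S_n with uniform probability measure, the number of cycles of a permutation σ equals X_1(σ) + X_2(σ) + ... + X_n(σ), where X_k(σ) is the indicator that the projection of σ to S_k fixes the letter k. -/

import Mathlib

open Finset
open scoped Classical

/-- One projection step `S_{m+1} → S_m`: delete the top letter (the letter `m+1`,
i.e. the element `Fin.last m`) from its cycle. -/
def projStep {m : ℕ} (σ : Equiv.Perm (Fin (m + 1))) : Equiv.Perm (Fin m) :=
  Equiv.removeNone (finSuccEquivLast.permCongr σ)

/-- The composed projection `S_{k+j} → S_k`, deleting the letters `k+j, ..., k+1`. -/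
def projTo (k : ℕ) : (j : ℕ) → Equiv.Perm (Fin (k + j)) → Equiv.Perm (Fin k)
  | 0, σ => σ
  | j + 1, σ => projTo k j (projStep σ)

/-- `Xfun n k σ` is the indicator that the projection of `σ` to `S_k` fixes the
letter `k` (the top element of `Fin k`). -/
def Xfun (n k : ℕ) (σ : Equiv.Perm (Fin n)) : ℕ :=
  if h : 1 ≤ k ∧ k ≤ n then
    if projTo k (n - k) ((finCongr (by omega : n = k + (n - k))).permCongr σ)
        ⟨k - 1, by omega⟩ = (⟨k - 1, by omega⟩ : Fin k) then 1 else 0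
  else 0

/-- The number of cycles of `σ` (counting all orbits, i.e. nontrivial cycles
together with fixed points). -/
def cycleCount {n : ℕ} (σ : Equiv.Perm (Fin n)) : ℕ :=
  σ.cycleType.card + (Finset.univ.filter fun x => σ x = x).card

/-! Reinserting the deleted letter `m` as a fixed point turns `p_m σ` into `swap m (σ m) * σ`.
Left multiplication by the transposition `(x (σ x))` splits `x` off its cycle as a new fixed
point, so for `σ x ≠ x` it raises the number of cycles by one. Hence `p_m` lowers the number of
cycles by exactly `X_m(σ)`, while it leaves `X_k` unchanged for `k < m`; induct on `n`. -/

open Equiv Equiv.Perm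

namespace Equiv.Perm

variable {α : Type*} [Fintype α] [DecidableEq α]

theorem IsCycle.card_cycleType_swap_mul_add_card_support {c : Perm α} (hc : c.IsCycle) {x : α}
    (hx : c x ≠ x) :
    Multiset.card (swap x (c x) * c).cycleType + #c.support
      = #(swap x (c x) * c).support + 2 := by
  by_cases hcc : c (c x) = x
  · rw [hc.eq_swap_of_apply_apply_eq_self hx hcc, swap_apply_left, swap_mul_self,
      card_support_swap hx.symm]
    simp
  · rw [(hc.swap_mul hx hcc).cycleType, support_swap_mul_eq c x hcc,
      Finset.card_sdiff_of_subset (by simpa using hx)]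
    have := hc.two_le_card_support
    simp only [Multiset.card_singleton, card_singleton]
    omega

/-- Since `#σ.support + #(fixed points of σ) = card α`, this says that the number of cycles,
fixed points included, goes up by one. -/
theorem card_cycleType_swap_mul_add_card_support {f : Perm α} {x : α} (hx : f x ≠ x) :
    Multiset.card (swap x (f x) * f).cycleType + #f.support
      = Multiset.card f.cycleType + #(swap x (f x) * f).support + 1 := by
  set c := f.cycleOf x
  have hc : c.IsCycle := f.isCycle_cycleOf hx
  have hcx : c x = f x := f.cycleOf_apply_self x
  set d := f * c⁻¹
  have hdc : Disjoint d c := disjoint_mul_inv_of_mem_cycleFactorsFinset <|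
    cycleOf_mem_cycleFactorsFinset_iff.2 (mem_support.2 hx)
  have hf : f = c * d := by rw [← hdc.commute.eq]; simp [d]
  have hdc' : Disjoint d (swap x (c x) * c) := by
    rw [disjoint_iff_disjoint_support] at hdc ⊢
    exact hdc.mono_right fun y hy => (mem_support_swap_mul_imp_mem_support_ne hy).1
  have hcycle := hc.card_cycleType_swap_mul_add_card_support (hcx ▸ hx)
  rw [← hcx, hf, ← mul_assoc, hdc.symm.cycleType_mul, hdc.symm.card_support_mul,
    hdc'.symm.cycleType_mul, hdc'.symm.card_support_mul, hc.cycleType]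
  simp only [Multiset.card_add, Multiset.card_singleton]
  omega

end Equiv.Perm

theorem extendDomain_projStep {n : ℕ} (σ : Perm (Fin (n + 1))) :
    (projStep σ).extendDomain (finSuccAboveEquiv (Fin.last n))
      = swap (Fin.last n) (σ (Fin.last n)) * σ := by
  refine Equiv.ext fun i => ?_
  induction i using Fin.lastCases with
  | last =>
    rw [extendDomain_apply_not_subtype _ _ (by simp)]
    simp
  | cast i =>
    have h := DFunLike.congr_fun (map_equiv_removeNone (finSuccEquivLast.permCongr σ)) (some i)
    simp only [optionCongr_apply, Option.map_some] at h
    rw [← Fin.succAbove_last,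
      show (Fin.last n).succAbove i = finSuccAboveEquiv (Fin.last n) i from rfl,
      extendDomain_apply_image]
    apply finSuccEquivLast.injective
    rw [Perm.mul_apply, finSuccEquivLast.injective.map_swap]
    simpa [projStep, finSuccAboveEquiv_apply] using h

theorem cycleCount_add_card_support {n : ℕ} (σ : Perm (Fin n)) :
    cycleCount σ + #σ.support = Multiset.card σ.cycleType + n := by
  rw [cycleCount, add_assoc, support, card_filter_add_card_filter_not, card_univ,
    Fintype.card_fin]

theorem cycleCount_eq_cycleCount_projStep_add {n : ℕ} (σ : Perm (Fin (n + 1))) :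
    cycleCount σ = cycleCount (projStep σ) + if σ (Fin.last n) = Fin.last n then 1 else 0 := by
  have hσ := cycleCount_add_card_support σ
  have hproj := cycleCount_add_card_support (projStep σ)
  have hcycleType :
      (swap (Fin.last n) (σ (Fin.last n)) * σ).cycleType = (projStep σ).cycleType := by
    rw [← extendDomain_projStep, cycleType_extendDomain]
  have hsupport : #(swap (Fin.last n) (σ (Fin.last n)) * σ).support = #(projStep σ).support := by
    rw [← extendDomain_projStep, card_support_extend_domain]
  split_ifs with h
  · rw [h, swap_self, ← Perm.one_def, one_mul] at hcycleType hsupport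
    rw [hcycleType, hsupport] at hσ
    omega
  · have hswap := card_cycleType_swap_mul_add_card_support h
    rw [hcycleType, hsupport] at hswap
    omega

theorem Xfun_add (m j : ℕ) (σ : Perm (Fin (m + 1 + j))) :
    Xfun (m + 1 + j) (m + 1) σ =
      if projTo (m + 1) j σ (Fin.last m) = Fin.last m then 1 else 0 := by
  have hcast : ∀ j' (h : j = j') (hn : m + 1 + j = m + 1 + j'),
      projTo (m + 1) j' ((finCongr hn).permCongr σ) = projTo (m + 1) j σ := by
    rintro _ rfl _
    simp [← Perm.one_def]
  rw [Xfun, dif_pos (by omega), hcast _ (by omega)]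
  rfl

theorem Xfun_self {n : ℕ} (σ : Perm (Fin (n + 1))) :
    Xfun (n + 1) (n + 1) σ = if σ (Fin.last n) = Fin.last n then 1 else 0 :=
  Xfun_add n 0 σ

theorem Xfun_projStep {n k : ℕ} (hk : k ∈ Icc 1 n) (σ : Perm (Fin (n + 1))) :
    Xfun (n + 1) k σ = Xfun n k (projStep σ) := by
  obtain ⟨m, j, rfl, rfl⟩ : ∃ m j, k = m + 1 ∧ n = m + 1 + j :=
    ⟨k - 1, n - k, by grind, by grind⟩
  exact (Xfun_add m (j + 1) σ).trans (Xfun_add m j (projStep σ)).symm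

/-- The number of cycles of `σ ∈ S_n` equals `X_1(σ) + ⋯ + X_n(σ)`. -/
theorem cycleCount_eq_sum_Xfun (n : ℕ) (σ : Equiv.Perm (Fin n)) :
    cycleCount σ = ∑ k ∈ Finset.Icc 1 n, Xfun n k σ := by
  induction n with
  | zero => simp [cycleCount, Subsingleton.elim σ 1]
  | succ n ih =>
    rw [sum_Icc_succ_top (by omega), sum_congr rfl fun k hk => Xfun_projStep hk σ, ← ih,
      Xfun_self, cycleCount_eq_cycleCount_projStep_add]
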